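/- arXiv:2604.00335 — 3 statements merged into one kernel-verified Lean document; each statement's English description precedes it below -/
import Mathlib

section
/- Let G be a finite group, O a transfer system on G, and M the maximal compatible transfer system of O. Then a transfer K → H ∈ O belongs to M if and only if for all subgroups I, J with I a proper subgroup of J and J ≤ H, whenever (K ∩ I) → (K ∩ J) ∈ O, also I → J ∈ O. -/
/-!
Call `K → H ∈ O` good if it satisfies the condition. For `Om` compatible with `O`, every
`K → H ∈ Om` is good: restrict it to `J` and apply compatibility to `I ≤ J`. Conversely the good
transfers form a transfer system compatible with `O`; for closure under composition of `L → K`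
and `K → H`, the transfer `(K ⊓ I) → (K ⊓ J)` needed for `K → H` comes from the condition on
`L → K` applied to `K ⊓ I < K ⊓ J`, because `L ⊓ (K ⊓ I) = L ⊓ I`. Hence the good transfers are
exactly those of the maximal compatible transfer system.
-/

/-- A transfer system on a group `G`: a binary relation on subgroups refining
inclusion, which is reflexive, closed under conjugation, restriction, and
composition. -/
structure TransferSystem (G : Type*) [Group G] where
  rel : Subgroup G → Subgroup G → Prop
  le_of_rel : ∀ {K H : Subgroup G}, rel K H → K ≤ H
  refl : ∀ H : Subgroup G, rel H H
  conj : ∀ {K H : Subgroup G} (g : G), rel K H →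
    rel (K.map (MulAut.conj g).toMonoidHom) (H.map (MulAut.conj g).toMonoidHom)
  restrict : ∀ {K H : Subgroup G} (L : Subgroup G), rel K H → L ≤ H → rel (K ⊓ L) L
  comp : ∀ {L K H : Subgroup G}, rel L K → rel K H → rel L H

/-- The pair `(Oa, Om)` of transfer systems is compatible. -/
def TransferSystem.Compatible {G : Type*} [Group G] (Oa Om : TransferSystem G) : Prop :=
  (∀ K H : Subgroup G, Om.rel K H → Oa.rel K H) ∧
  ∀ K J H : Subgroup G, J ≤ H → Om.rel K H → Oa.rel (K ⊓ J) K → Oa.rel J H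

/-- `M` is the maximal compatible transfer system of `O`. -/
def TransferSystem.IsMaxCompatible {G : Type*} [Group G] (O M : TransferSystem G) : Prop :=
  O.Compatible M ∧
  ∀ Om : TransferSystem G, O.Compatible Om → ∀ K H : Subgroup G, Om.rel K H → M.rel K H

/-- `T` is the transfer system generated by the binary relation `B`, i.e. the
smallest transfer system containing `B`. -/
def TransferSystem.IsGeneratedBy {G : Type*} [Group G] (T : TransferSystem G)
    (B : Subgroup G → Subgroup G → Prop) : Prop :=
  (∀ K H : Subgroup G, B K H → T.rel K H) ∧
  ∀ T' : TransferSystem G, (∀ K H : Subgroup G, B K H → T'.rel K H) →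
    ∀ K H : Subgroup G, T.rel K H → T'.rel K H

/-- The single transfer `K → H` is compatible with `Oa`. -/
def TransferSystem.EdgeCompatible {G : Type*} [Group G] (Oa : TransferSystem G)
    (K H : Subgroup G) : Prop :=
  ∀ J : Subgroup G, J ≤ H → Oa.rel (K ⊓ J) K → Oa.rel J H

/-- A transfer system is saturated. -/
def TransferSystem.Saturated {G : Type*} [Group G] (O : TransferSystem G) : Prop :=
  ∀ L K H : Subgroup G, L ≤ K → K ≤ H → O.rel L H → O.rel K H

/-- A transfer system is disklike: every transfer is a restriction of a
transfer to the full group. -/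
def TransferSystem.Disklike {G : Type*} [Group G] (O : TransferSystem G) : Prop :=
  ∀ K H : Subgroup G, O.rel K H → ∃ L : Subgroup G, O.rel L ⊤ ∧ K = L ⊓ H

/-- `r` is a proper restriction of `e` in the restriction order on transfers,
viewed as pairs of subgroups. -/
def RestrLt {G : Type*} [Group G] (r e : Subgroup G × Subgroup G) : Prop :=
  ∃ I : Subgroup G, I < e.2 ∧ r = (e.1 ⊓ I, I)

/-- `r ≺ e`: `r` is covered by `e` in the restriction order on transfers of `O`. -/
def RestrCovBy {G : Type*} [Group G] (O : TransferSystem G)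
    (r e : Subgroup G × Subgroup G) : Prop :=
  RestrLt r e ∧
    ¬ ∃ q : Subgroup G × Subgroup G, O.rel q.1 q.2 ∧ RestrLt r q ∧ RestrLt q e

/-- The binary relation `p⁻¹O` on subgroups of `G`, for `O` a transfer system
on `G ⧸ N`. -/
def preimageRel {G : Type*} [Group G] (N : Subgroup G) [N.Normal]
    (O : TransferSystem (G ⧸ N)) : Subgroup G → Subgroup G → Prop :=
  fun A B => ∃ K H : Subgroup (G ⧸ N), O.rel K H ∧
    A = Subgroup.comap (QuotientGroup.mk' N) K ∧ B = Subgroup.comap (QuotientGroup.mk' N) H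

namespace TransferSystem

variable {G : Type*} [Group G]

lemma rel_mapSubgroup_conj_iff (O : TransferSystem G) (g : G) {K H : Subgroup G} :
    O.rel ((MulAut.conj g).mapSubgroup K) ((MulAut.conj g).mapSubgroup H) ↔ O.rel K H := by
  refine ⟨fun h => ?_, O.conj g⟩
  have hinv : (MulAut.conj g⁻¹).mapSubgroup = (MulAut.conj g).mapSubgroup.symm := by
    rw [MulEquiv.symm_mapSubgroup, map_inv]
    rfl
  have h' : O.rel ((MulAut.conj g⁻¹).mapSubgroup _) ((MulAut.conj g⁻¹).mapSubgroup _) :=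
    O.conj g⁻¹ h
  rwa [hinv, OrderIso.symm_apply_apply, OrderIso.symm_apply_apply] at h'

def ReflectsRestrictions (O : TransferSystem G) (K H : Subgroup G) : Prop :=
  ∀ I J : Subgroup G, I < J → J ≤ H → O.rel (K ⊓ I) (K ⊓ J) → O.rel I J

lemma Compatible.reflectsRestrictions {O Om : TransferSystem G} (h : O.Compatible Om)
    {K H : Subgroup G} (hKH : Om.rel K H) : O.ReflectsRestrictions K H := by
  intro I J hIJ hJH hO
  refine h.2 (K ⊓ J) I J hIJ.le (Om.restrict J hKH hJH) ?_
  rwa [inf_assoc, inf_eq_right.mpr hIJ.le]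

namespace ReflectsRestrictions

variable {O : TransferSystem G}

lemma refl (H : Subgroup G) : O.ReflectsRestrictions H H := by
  intro I J hIJ hJH hO
  rwa [inf_eq_right.mpr (hIJ.le.trans hJH), inf_eq_right.mpr hJH] at hO

lemma restrict {K H : Subgroup G} (h : O.ReflectsRestrictions K H) {L : Subgroup G}
    (hLH : L ≤ H) : O.ReflectsRestrictions (K ⊓ L) L := by
  intro I J hIJ hJL hO
  rw [inf_assoc, inf_eq_right.mpr (hIJ.le.trans hJL), inf_assoc, inf_eq_right.mpr hJL] at hO
  exact h I J hIJ (hJL.trans hLH) hO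

lemma comp {L K H : Subgroup G} (hLK : L ≤ K) (hL : O.ReflectsRestrictions L K)
    (hK : O.ReflectsRestrictions K H) : O.ReflectsRestrictions L H := by
  intro I J hIJ hJH hO
  refine hK I J hIJ hJH ?_
  rcases (inf_le_inf_left K hIJ.le).eq_or_lt with heq | hlt
  · rw [heq]
    exact O.refl _
  · refine hL _ _ hlt inf_le_left ?_
    rwa [← inf_assoc, ← inf_assoc, inf_eq_left.mpr hLK]

lemma conj {K H : Subgroup G} (h : O.ReflectsRestrictions K H) (g : G) :
    O.ReflectsRestrictions ((MulAut.conj g).mapSubgroup K) ((MulAut.conj g).mapSubgroup H) := by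
  set e := (MulAut.conj g).mapSubgroup
  intro I J hIJ hJH hO
  obtain ⟨I, rfl⟩ := e.surjective I
  obtain ⟨J, rfl⟩ := e.surjective J
  rw [← map_inf, ← map_inf, O.rel_mapSubgroup_conj_iff] at hO
  exact O.conj g (h I J (e.lt_iff_lt.mp hIJ) (e.le_iff_le.mp hJH) hO)

end ReflectsRestrictions

def maxCompatible (O : TransferSystem G) : TransferSystem G where
  rel K H := O.rel K H ∧ O.ReflectsRestrictions K H
  le_of_rel h := O.le_of_rel h.1
  refl H := ⟨O.refl H, .refl H⟩
  conj g h := ⟨O.conj g h.1, h.2.conj g⟩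
  restrict L h hLH := ⟨O.restrict L h.1 hLH, h.2.restrict hLH⟩
  comp hLK hKH := ⟨O.comp hLK.1 hKH.1, hLK.2.comp (O.le_of_rel hLK.1) hKH.2⟩

lemma compatible_maxCompatible (O : TransferSystem G) : O.Compatible O.maxCompatible := by
  refine ⟨fun K H h => h.1, fun K J H hJH hKH hO => ?_⟩
  rcases hJH.eq_or_lt with rfl | hlt
  · exact O.refl J
  · refine hKH.2 J H hlt le_rfl ?_
    rwa [inf_eq_left.mpr (O.le_of_rel hKH.1)]

lemma isMaxCompatible_maxCompatible (O : TransferSystem G) :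
    O.IsMaxCompatible O.maxCompatible :=
  ⟨O.compatible_maxCompatible, fun _ h _ _ hKH => ⟨h.1 _ _ hKH, h.reflectsRestrictions hKH⟩⟩

end TransferSystem

theorem stmt_4_general {G : Type*} [Group G] (O M : TransferSystem G)
    (hM : O.IsMaxCompatible M) (K H : Subgroup G) (hKH : O.rel K H) :
    M.rel K H ↔
      ∀ I J : Subgroup G, I < J → J ≤ H → O.rel (K ⊓ I) (K ⊓ J) → O.rel I J :=
  ⟨fun h => (O.isMaxCompatible_maxCompatible.2 M hM.1 K H h).2,
    fun h => hM.2 O.maxCompatible O.compatible_maxCompatible K H ⟨hKH, h⟩⟩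

/-- a transfer `K → H ∈ O` belongs to the maximal compatible
transfer system `M` of `O` iff for all `I < J ≤ H`, whenever
`(K ∩ I) → (K ∩ J) ∈ O`, also `I → J ∈ O`. -/
theorem stmt_4 {G : Type*} [Group G] [Finite G] (O M : TransferSystem G)
    (hM : O.IsMaxCompatible M) (K H : Subgroup G) (hKH : O.rel K H) :
    M.rel K H ↔
      ∀ I J : Subgroup G, I < J → J ≤ H → O.rel (K ⊓ I) (K ⊓ J) → O.rel I J :=
  stmt_4_general O M hM K H hKH
end

section
/- Let G be a finite group, N a normal subgroup of G, p : G → G/N the quotient map, and O a transfer system on G/N. If O is disklike (as a transfer system on G/N), then the inflation p*O is a disklike transfer system on G. -/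
/-
Every transfer `A → B` of `p*O` satisfies `A ≤ B`, `N ⊓ B ≤ A` and `p(A) → p(B) ∈ O`, because
these conditions define a transfer system containing `p⁻¹O`. The condition `N ⊓ B ≤ A` makes `A`
the restriction `p⁻¹(p A) ⊓ B`. So if `p(A) = M ⊓ p(B)` with `M → G/N` in `O`, then `p⁻¹(M) → G`
lies in `p⁻¹O` and `A = p⁻¹(M) ⊓ B`.
-/

open QuotientGroup Subgroup

namespace QuotientGroup

variable {G : Type*} [Group G] {N : Subgroup G} [N.Normal]

theorem comap_map_mk'_inf_eq {K H : Subgroup G} (hKH : K ≤ H) (hNK : N ⊓ H ≤ K) :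
    (K.map (mk' N)).comap (mk' N) ⊓ H = K := by
  refine le_antisymm ?_ (le_inf (le_comap_map _ _) hKH)
  rw [comap_map_mk', ← SetLike.coe_subset_coe, coe_inf, normal_mul, Set.inter_comm,
    ← inf_mul_assoc H N K hKH, inf_comm]
  exact (Set.mul_subset_mul_right (SetLike.coe_subset_coe.mpr hNK)).trans_eq (coe_mul_coe K)

theorem map_mk'_inf_eq {K L H : Subgroup G} (hKH : K ≤ H) (hLH : L ≤ H) (hNK : N ⊓ H ≤ K) :
    (K ⊓ L).map (mk' N) = K.map (mk' N) ⊓ L.map (mk' N) := by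
  refine le_antisymm (le_inf (map_mono inf_le_left) (map_mono inf_le_right)) ?_
  rintro _ ⟨hK, l, hl, rfl⟩
  have hlK : l ∈ K := comap_map_mk'_inf_eq hKH hNK ▸ ⟨hK, hLH hl⟩
  exact ⟨l, ⟨hlK, hl⟩, rfl⟩

theorem map_mk'_map_conj (g : G) (A : Subgroup G) :
    (A.map (MulAut.conj g).toMonoidHom).map (mk' N)
      = (A.map (mk' N)).map (MulAut.conj (mk' N g)).toMonoidHom := by
  rw [Subgroup.map_map, Subgroup.map_map]
  congr 1

end QuotientGroup

namespace TransferSystem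

def inflation {G : Type*} [Group G] (N : Subgroup G) [N.Normal] (O : TransferSystem (G ⧸ N)) :
    TransferSystem G where
  rel A B := A ≤ B ∧ N ⊓ B ≤ A ∧ O.rel (A.map (mk' N)) (B.map (mk' N))
  le_of_rel h := h.1
  refl H := ⟨le_rfl, inf_le_right, O.refl _⟩
  conj := by
    rintro A B g ⟨hAB, hNA, hO⟩
    refine ⟨map_mono hAB, ?_, ?_⟩
    · have hN : N.map (MulAut.conj g).toMonoidHom = N := Normal.map_conj_eq N g
      calc N ⊓ B.map (MulAut.conj g).toMonoidHom
          = (N ⊓ B).map (MulAut.conj g).toMonoidHom := by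
            rw [map_inf _ _ _ (MulAut.conj g).injective, hN]
        _ ≤ A.map (MulAut.conj g).toMonoidHom := map_mono hNA
    · rw [map_mk'_map_conj, map_mk'_map_conj]
      exact O.conj _ hO
  restrict := by
    rintro A B L ⟨hAB, hNA, hO⟩ hLB
    refine ⟨inf_le_right, le_inf ((inf_le_inf_left N hLB).trans hNA) inf_le_right, ?_⟩
    rw [map_mk'_inf_eq hAB hLB hNA]
    exact O.restrict _ hO (map_mono hLB)
  comp := by
    rintro L K H ⟨hLK, hNL, hO₁⟩ ⟨hKH, hNK, hO₂⟩
    exact ⟨hLK.trans hKH, (le_inf inf_le_left hNK).trans hNL, O.comp hO₁ hO₂⟩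

theorem inflation_rel_of_preimageRel {G : Type*} [Group G] {N : Subgroup G} [N.Normal]
    (O : TransferSystem (G ⧸ N)) {A B : Subgroup G}
    (h : preimageRel N O A B) : (inflation N O).rel A B := by
  obtain ⟨K, H, hO, rfl, rfl⟩ := h
  refine ⟨comap_mono (O.le_of_rel hO), inf_le_left.trans (le_comap_mk' N K), ?_⟩
  rwa [map_comap_eq_self_of_surjective (mk'_surjective N),
    map_comap_eq_self_of_surjective (mk'_surjective N)]

end TransferSystem

theorem stmt_14_general {G : Type*} [Group G] (N : Subgroup G) [N.Normal]
    (O : TransferSystem (G ⧸ N)) (P : TransferSystem G)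
    (hP : P.IsGeneratedBy (preimageRel N O)) (hd : O.Disklike) :
    P.Disklike := by
  intro K H hP_KH
  obtain ⟨hKH, hNK, hO⟩ := hP.2 (TransferSystem.inflation N O)
    (fun _ _ => TransferSystem.inflation_rel_of_preimageRel O) K H hP_KH
  obtain ⟨M, hM, hKM⟩ := hd _ _ hO
  refine ⟨M.comap (mk' N), hP.1 _ _ ⟨M, ⊤, hM, rfl, (comap_top (mk' N)).symm⟩, ?_⟩
  calc K = (K.map (mk' N)).comap (mk' N) ⊓ H := (comap_map_mk'_inf_eq hKH hNK).symm
    _ = M.comap (mk' N) ⊓ H := by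
      rw [hKM, comap_inf, inf_assoc, inf_eq_right.mpr (le_comap_map _ _)]

/-- inflation preserves being disklike. -/
theorem stmt_14 {G : Type*} [Group G] [Finite G] (N : Subgroup G) [N.Normal]
    (O : TransferSystem (G ⧸ N)) (P : TransferSystem G)
    (hP : P.IsGeneratedBy (preimageRel N O)) (hd : O.Disklike) :
    P.Disklike :=
  stmt_14_general N O P hP hd
end

section
/- Let G be a finite group, N a normal subgroup of G, p : G → G/N the quotient map, and let O and O_m be transfer systems on G/N. If the pair (O, O_m) is compatible, then the pair of inflations (p*O, p*O_m) is a compatible pair of transfer systems on G. -/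
/-!
The inflation `p*O` has an explicit description: `A → B` is a transfer iff `A ≤ B`, `B ⊓ N ≤ A`
and `p A → p B` is a transfer of `O`. This relation is a transfer system containing `p⁻¹O`, and
it is the smallest one since `A = B ⊓ p⁻¹(p A)` is the restriction of a generator to `B`.
Under `B ⊓ N ≤ A` the map `p` commutes with intersecting `A` by subgroups of `B`, so
`p (K ⊓ J) = p K ⊓ p J` for `K → H` in `p*O_m` and `J ≤ H`, and the compatibility condition for
`(p*O, p*O_m)` reduces to the one for `(O, O_m)`.
-/

namespace Subgroup

variable {G Q : Type*} [Group G] [Group Q] (f : G →* Q) {A B : Subgroup G}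

lemma mem_of_inf_ker_le (hker : B ⊓ f.ker ≤ A) {a b : G} (ha : a ∈ A) (haB : a ∈ B)
    (hb : b ∈ B) (h : f a = f b) : b ∈ A := by
  have hn : a⁻¹ * b ∈ B ⊓ f.ker :=
    ⟨B.mul_mem (B.inv_mem haB) hb, by simp [h]⟩
  simpa using A.mul_mem ha (hker hn)

lemma inf_comap_map_eq_of_inf_ker_le (hAB : A ≤ B) (hker : B ⊓ f.ker ≤ A) :
    B ⊓ (A.map f).comap f = A := by
  refine le_antisymm ?_ (le_inf hAB (le_comap_map f A))
  rintro b ⟨hb, a, ha, hab⟩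
  exact mem_of_inf_ker_le f hker ha (hAB ha) hb hab

lemma map_inf_eq_of_inf_ker_le (hAB : A ≤ B) (hker : B ⊓ f.ker ≤ A) {C : Subgroup G}
    (hCB : C ≤ B) : (A ⊓ C).map f = A.map f ⊓ C.map f := by
  refine le_antisymm (map_inf_le _ _ _) ?_
  rintro _ ⟨⟨a, ha, rfl⟩, c, hc, hca⟩
  exact ⟨c, ⟨mem_of_inf_ker_le f hker ha (hAB ha) (hCB hc) hca.symm, hc⟩, hca⟩

lemma map_map_conj (g : G) (A : Subgroup G) :
    (A.map (MulAut.conj g).toMonoidHom).map f =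
      (A.map f).map (MulAut.conj (f g)).toMonoidHom := by
  simp only [map_map]
  congr 1
  ext
  simp

lemma map_conj_inf_ker_le (g : G) (hker : B ⊓ f.ker ≤ A) :
    B.map (MulAut.conj g).toMonoidHom ⊓ f.ker ≤ A.map (MulAut.conj g).toMonoidHom := by
  rintro _ ⟨⟨b, hb, rfl⟩, hk⟩
  refine ⟨b, hker ⟨hb, ?_⟩, rfl⟩
  simpa [MonoidHom.mem_ker] using hk

end Subgroup

namespace TransferSystem

open Subgroup

variable {G Q : Type*} [Group G] [Group Q]

lemma ext {T T' : TransferSystem G} (h : T.rel = T'.rel) : T = T' := by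
  cases T
  cases T'
  congr

lemma IsGeneratedBy.eq {T T' : TransferSystem G} {R : Subgroup G → Subgroup G → Prop}
    (hT : T.IsGeneratedBy R) (hT' : T'.IsGeneratedBy R) : T = T' :=
  ext <| funext₂ fun K H => propext ⟨hT.2 T' hT'.1 K H, hT'.2 T hT.1 K H⟩

def inflate (O : TransferSystem Q) (f : G →* Q) : TransferSystem G where
  rel A B := A ≤ B ∧ B ⊓ f.ker ≤ A ∧ O.rel (A.map f) (B.map f)
  le_of_rel h := h.1
  refl H := ⟨le_rfl, inf_le_left, O.refl _⟩
  conj g := fun ⟨hKH, hker, hO⟩ =>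
    ⟨map_mono hKH, map_conj_inf_ker_le f g hker, by
      rw [map_map_conj, map_map_conj]
      exact O.conj _ hO⟩
  restrict L := fun ⟨hKH, hker, hO⟩ hLH =>
    ⟨inf_le_right, le_inf ((inf_le_inf_right _ hLH).trans hker) inf_le_left, by
      rw [map_inf_eq_of_inf_ker_le f hKH hker hLH]
      exact O.restrict _ hO (map_mono hLH)⟩
  comp := fun ⟨hLK, hker, hO⟩ ⟨hKH, hker', hO'⟩ =>
    ⟨hLK.trans hKH, (le_inf hker' inf_le_right).trans hker, O.comp hO hO'⟩

lemma isGeneratedBy_inflate (N : Subgroup G) [N.Normal] (O : TransferSystem (G ⧸ N)) :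
    (O.inflate (QuotientGroup.mk' N)).IsGeneratedBy (preimageRel N O) := by
  constructor
  · rintro _ _ ⟨K, H, hKH, rfl, rfl⟩
    have hs := QuotientGroup.mk'_surjective N
    refine ⟨comap_mono (O.le_of_rel hKH), inf_le_right.trans (MonoidHom.ker_le_comap _ K), ?_⟩
    rwa [map_comap_eq_self_of_surjective hs, map_comap_eq_self_of_surjective hs]
  · rintro T hT A B ⟨hAB, hker, hO⟩
    have hres := T.restrict B (hT _ _ ⟨_, _, hO, rfl, rfl⟩) (le_comap_map _ B)
    rwa [inf_comm, inf_comap_map_eq_of_inf_ker_le _ hAB hker] at hres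

lemma Compatible.inflate {O Om : TransferSystem Q} (hc : O.Compatible Om) (f : G →* Q) :
    (O.inflate f).Compatible (Om.inflate f) := by
  refine ⟨fun K H ⟨hKH, hker, hOm⟩ => ⟨hKH, hker, hc.1 _ _ hOm⟩, ?_⟩
  rintro K J H hJH ⟨hKH, hker, hOm⟩ ⟨-, hker', hO⟩
  refine ⟨hJH, ((le_inf hker inf_le_right).trans hker').trans inf_le_right, ?_⟩
  refine hc.2 _ _ _ (map_mono hJH) hOm ?_
  rwa [← map_inf_eq_of_inf_ker_le f hKH hker hJH]

end TransferSystem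

theorem stmt_19_general {G : Type*} [Group G] (N : Subgroup G) [N.Normal]
    (O Om : TransferSystem (G ⧸ N)) (PO POm : TransferSystem G)
    (hPO : PO.IsGeneratedBy (preimageRel N O)) (hPOm : POm.IsGeneratedBy (preimageRel N Om))
    (hc : O.Compatible Om) :
    PO.Compatible POm := by
  rw [hPO.eq (TransferSystem.isGeneratedBy_inflate N O),
    hPOm.eq (TransferSystem.isGeneratedBy_inflate N Om)]
  exact hc.inflate _

/-- inflation preserves compatibility. -/
theorem stmt_19 {G : Type*} [Group G] [Finite G] (N : Subgroup G) [N.Normal]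
    (O Om : TransferSystem (G ⧸ N)) (PO POm : TransferSystem G)
    (hPO : PO.IsGeneratedBy (preimageRel N O)) (hPOm : POm.IsGeneratedBy (preimageRel N Om))
    (hc : O.Compatible Om) :
    PO.Compatible POm :=
  stmt_19_general N O Om PO POm hPO hPOm hc
end
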